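/- arXiv:2110.01869 — 2 statements merged into one kernel-verified Lean document; each statement's English description precedes it below -/
import Mathlib

section
/- Let Ω ⊂ ℝⁿ be a bounded open set with smooth boundary, and suppose that for constants η₁,…,ηₙ ≠ 0 the outward unit normal of ∂Ω satisfies ν = (η₁x₁, …, ηₙxₙ) at every point of ∂Ω. Then η₁ = η₂ = ⋯ = ηₙ and ∂Ω is a round sphere centered at the origin. -/
open Finset RealInnerProductSpace

namespace NRAux

variable {n : ℕ}

noncomputable def F (η : Fin n → ℝ) (x : EuclideanSpace ℝ (Fin n)) : ℝ :=
  ∑ k, (η k * x k) ^ 2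

lemma F_nonneg (η : Fin n → ℝ) (x : EuclideanSpace ℝ (Fin n)) : 0 ≤ F η x :=
  Finset.sum_nonneg fun _ _ => sq_nonneg _

lemma F_smul (η : Fin n → ℝ) (t : ℝ) (x : EuclideanSpace ℝ (Fin n)) :
    F η (t • x) = t ^ 2 * F η x := by
  unfold F
  rw [Finset.mul_sum]
  refine Finset.sum_congr rfl fun k _ => ?_
  have : (t • x) k = t * x k := rfl
  rw [this]; ring

lemma F_cont (η : Fin n → ℝ) : Continuous (F η) := by
  exact continuous_finset_sum _ fun k _ =>
    (continuous_const.mul (EuclideanSpace.proj (𝕜 := ℝ) k).continuous).pow 2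

lemma F_zero (η : Fin n → ℝ) : F η (0 : EuclideanSpace ℝ (Fin n)) = 0 := by
  unfold F
  simp

lemma ne_zero_of_F_one {η : Fin n → ℝ} {x : EuclideanSpace ℝ (Fin n)} (hx : F η x = 1) :
    x ≠ 0 := by
  intro h; rw [h, F_zero] at hx; norm_num at hx

lemma near_gt {η : Fin n → ℝ} {x : EuclideanSpace ℝ (Fin n)} (hx : F η x = 1)
    {ε : ℝ} (hε : 0 < ε) : ∃ y, dist y x < ε ∧ 1 < F η y := by
  have hx0 : x ≠ 0 := ne_zero_of_F_one hx
  have hnx : 0 < ‖x‖ := norm_pos_iff.mpr hx0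
  set δ : ℝ := ε / (2 * ‖x‖) with hδ
  have hδ0 : 0 < δ := by positivity
  refine ⟨(1 + δ) • x, ?_, ?_⟩
  · have : (1 + δ) • x - x = δ • x := by
      rw [add_smul, one_smul]; abel
    rw [dist_eq_norm, this, norm_smul, Real.norm_eq_abs, abs_of_pos hδ0, hδ]
    rw [div_mul_eq_mul_div]
    rw [div_lt_iff₀ (by positivity)]
    nlinarith
  · rw [F_smul, hx, mul_one]
    nlinarith

lemma near_lt {η : Fin n → ℝ} {x : EuclideanSpace ℝ (Fin n)} (hx : F η x = 1)
    {ε : ℝ} (hε : 0 < ε) : ∃ y, dist y x < ε ∧ F η y < 1 := by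
  have hx0 : x ≠ 0 := ne_zero_of_F_one hx
  have hnx : 0 < ‖x‖ := norm_pos_iff.mpr hx0
  set δ : ℝ := min (ε / (2 * ‖x‖)) (1/2) with hδ
  have hδ0 : 0 < δ := lt_min (by positivity) (by norm_num)
  have hδ1 : δ ≤ 1/2 := min_le_right _ _
  refine ⟨(1 - δ) • x, ?_, ?_⟩
  · have h1 : (1 - δ) • x - x = (-δ) • x := by
      rw [sub_smul, one_smul, neg_smul]; abel
    rw [dist_eq_norm, h1, norm_smul, Real.norm_eq_abs, abs_neg, abs_of_pos hδ0]
    have h2 : δ * ‖x‖ ≤ (ε / (2 * ‖x‖)) * ‖x‖ :=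
      mul_le_mul_of_nonneg_right (min_le_left _ _) (le_of_lt hnx)
    have h3 : (ε / (2 * ‖x‖)) * ‖x‖ = ε / 2 := by field_simp
    rw [h3] at h2; linarith
  · rw [F_smul, hx, mul_one]
    nlinarith

lemma convex_U (η : Fin n → ℝ) : Convex ℝ {x : EuclideanSpace ℝ (Fin n) | F η x < 1} := by
  intro x hx y hy a b ha hb hab
  have key : F η (a • x + b • y) ≤ a * F η x + b * F η y := by
    unfold F
    rw [Finset.mul_sum, Finset.mul_sum, ← Finset.sum_add_distrib]
    refine Finset.sum_le_sum fun k _ => ?_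
    have hax : (a • x + b • y) k = a * x k + b * y k := rfl
    rw [hax]
    nlinarith [sq_nonneg (η k * x k - η k * y k), mul_nonneg ha hb,
      sq_nonneg (x k), sq_nonneg (y k)]
  have hx' : F η x < 1 := hx
  have hy' : F η y < 1 := hy
  calc F η (a • x + b • y) ≤ a * F η x + b * F η y := key
    _ < a * 1 + b * 1 := by
        rcases eq_or_lt_of_le ha with h|h
        · rcases eq_or_lt_of_le hb with h2|h2
          · exfalso; rw [← h, ← h2] at hab; norm_num at hab
          · simp [← h]; nlinarith
        · rcases eq_or_lt_of_le hb with h2|h2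
          · simp [← h2]; nlinarith
          · have := mul_lt_mul_of_pos_left hx' h
            have := mul_lt_mul_of_pos_left hy' h2
            nlinarith
    _ = 1 := by linarith


lemma sum_split {M : Type*} [AddCommMonoid M] {i j : Fin n} (hij : i ≠ j) (g : Fin n → M) :
    ∑ k, g k = g i + g j + ∑ k ∈ (Finset.univ.erase i).erase j, g k := by
  rw [← Finset.add_sum_erase _ g (Finset.mem_univ i)]
  rw [← Finset.add_sum_erase _ g (Finset.mem_erase.mpr ⟨hij.symm, Finset.mem_univ j⟩)]
  abel

open Filter in
lemma tangent_mem (η : Fin n → ℝ) (hη : ∀ i, η i ≠ 0) {i j : Fin n} (hij : i ≠ j)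
    (x : EuclideanSpace ℝ (Fin n)) (hx : F η x = 1) :
    (EuclideanSpace.single i (-(η j * x j) / η i) + EuclideanSpace.single j ((η i * x i) / η j))
      ∈ tangentConeAt ℝ {y : EuclideanSpace ℝ (Fin n) | F η y = 1} x := by
  set v : EuclideanSpace ℝ (Fin n) :=
    EuclideanSpace.single i (-(η j * x j) / η i) + EuclideanSpace.single j ((η i * x i) / η j)
    with hv
  set w : EuclideanSpace ℝ (Fin n) :=
    EuclideanSpace.single i (x i) + EuclideanSpace.single j (x j) with hw
  set y : ℝ → EuclideanSpace ℝ (Fin n) :=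
    fun t => x + ((Real.cos t - 1) • w + Real.sin t • v) with hy
  have hvi : v i = -(η j * x j) / η i := by
    rw [hv]; simp [EuclideanSpace.single_apply, hij, hij.symm]
  have hvj : v j = (η i * x i) / η j := by
    rw [hv]; simp [EuclideanSpace.single_apply, hij, hij.symm]
  have hvk : ∀ k, k ≠ i → k ≠ j → v k = 0 := by
    intro k hki hkj; rw [hv]; simp [EuclideanSpace.single_apply, hki, hkj]
  have hwi : w i = x i := by rw [hw]; simp [EuclideanSpace.single_apply, hij, hij.symm]
  have hwj : w j = x j := by rw [hw]; simp [EuclideanSpace.single_apply, hij, hij.symm]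
  have hwk : ∀ k, k ≠ i → k ≠ j → w k = 0 := by
    intro k hki hkj; rw [hw]; simp [EuclideanSpace.single_apply, hki, hkj]
  have hcomp : ∀ t k, (y t) k = x k + ((Real.cos t - 1) * w k + Real.sin t * v k) := by
    intro t k; rfl
  have hy0 : y 0 = x := by rw [hy]; simp
  have hmem : ∀ t, F η (y t) = 1 := by
    intro t
    have e1 : η i * (y t) i = (η i * x i) * Real.cos t - (η j * x j) * Real.sin t := by
      rw [hcomp t i, hwi, hvi]; field_simp [hη i]; ring
    have e2 : η j * (y t) j = (η j * x j) * Real.cos t + (η i * x i) * Real.sin t := by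
      rw [hcomp t j, hwj, hvj]; field_simp [hη j]; ring
    have hrest : ∑ k ∈ (Finset.univ.erase i).erase j, (η k * (y t) k) ^ 2
        = ∑ k ∈ (Finset.univ.erase i).erase j, (η k * x k) ^ 2 := by
      refine Finset.sum_congr rfl fun k hk => ?_
      rw [Finset.mem_erase, Finset.mem_erase] at hk
      rw [hcomp t k, hwk k hk.2.1 hk.1, hvk k hk.2.1 hk.1]
      ring_nf
    have hx' := hx
    unfold F at hx' ⊢
    rw [sum_split hij (fun k => (η k * (y t) k) ^ 2), hrest]
    rw [sum_split hij (fun k => (η k * x k) ^ 2)] at hx'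
    rw [← hx']
    simp only
    rw [mul_pow, mul_pow, ← mul_pow, ← mul_pow, e1, e2]
    linear_combination ((η i * x i) ^ 2 + (η j * x j) ^ 2) * Real.sin_sq_add_cos_sq t
  have hderiv : HasDerivAt y v 0 := by
    have h1 : HasDerivAt (fun t => (Real.cos t - 1) • w) ((-Real.sin 0) • w) 0 :=
      ((Real.hasDerivAt_cos 0).sub_const 1).smul_const w
    have h2 : HasDerivAt (fun t => Real.sin t • v) (Real.cos 0 • v) 0 :=
      (Real.hasDerivAt_sin 0).smul_const v
    have h3 := (h1.add h2).const_add x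
    have h4 : (-Real.sin 0) • w + Real.cos 0 • v = v := by simp
    rw [h4] at h3
    exact h3
  have hslope := hasDerivAt_iff_tendsto_slope.mp hderiv
  refine mem_tangentConeAt_iff_exists_seq_norm_tendsto_atTop.mpr
    ⟨fun m => (m : ℝ) + 1, fun m => y (1 / ((m : ℝ) + 1)) - x, ?_, ?_, ?_⟩
  swap
  · filter_upwards with m
    have h5 : x + (y (1 / ((m : ℝ) + 1)) - x) = y (1 / ((m : ℝ) + 1)) := by abel
    rw [h5]
    exact hmem _
  · have h5 : Tendsto (fun m : ℕ => (m : ℝ) + 1) atTop atTop :=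
      tendsto_atTop_add_const_right _ 1 tendsto_natCast_atTop_atTop
    refine (tendsto_abs_atTop_atTop.comp h5).congr fun m => ?_
    simp [Real.norm_eq_abs]
  · have ht : Tendsto (fun m : ℕ => 1 / ((m : ℝ) + 1)) atTop (nhdsWithin 0 {(0:ℝ)}ᶜ) := by
      refine tendsto_nhdsWithin_of_tendsto_nhds_of_eventually_within _
        tendsto_one_div_add_atTop_nhds_zero_nat ?_
      filter_upwards with m
      have : (0:ℝ) < 1 / ((m : ℝ) + 1) := by positivity
      exact ne_of_gt this
    have h6 := hslope.comp ht
    refine h6.congr fun m => ?_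
    simp only [Function.comp_apply, slope_def_module]
    rw [hy0, sub_zero, one_div, inv_inv]

end NRAux

open NRAux

theorem normal_rigidity_sphere (n : ℕ) (hn : 1 ≤ n)
    (Ω : Set (EuclideanSpace ℝ (Fin n))) (hΩ : IsOpen Ω) (hne : Ω.Nonempty)
    (hbdd : Bornology.IsBounded Ω)
    (ν : EuclideanSpace ℝ (Fin n) → EuclideanSpace ℝ (Fin n))
    (η : Fin n → ℝ) (hη : ∀ i, η i ≠ 0)
    -- ν is the outward unit normal of the boundary:
    (hunit : ∀ x ∈ frontier Ω, ‖ν x‖ = 1)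
    (hnormal : ∀ x ∈ frontier Ω, ∀ v ∈ tangentConeAt ℝ (frontier Ω) x, ⟪ν x, v⟫ = 0)
    -- the hypothesis ν = (η₁x₁, …, ηₙxₙ) on ∂Ω:
    (hform : ∀ x ∈ frontier Ω, ∀ i, ν x i = η i * x i) :
    (∀ i j, η i = η j) ∧ ∃ R : ℝ, 0 < R ∧ frontier Ω = Metric.sphere 0 R := by
  classical
  -- frontier is contained in the ellipsoid E = {F η = 1}
  have hsub : ∀ x ∈ frontier Ω, F η x = 1 := by
    intro x hx
    have h1 : ‖ν x‖ ^ 2 = ∑ k, (ν x k) ^ 2 := by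
      rw [EuclideanSpace.norm_eq, Real.sq_sqrt (by positivity)]
      exact Finset.sum_congr rfl fun k _ => by rw [Real.norm_eq_abs, sq_abs]
    rw [hunit x hx] at h1
    have h2 : ∑ k, (ν x k) ^ 2 = F η x :=
      Finset.sum_congr rfl fun k _ => by rw [hform x hx k]
    rw [h2] at h1
    rw [← h1]; norm_num
  have hEc : IsClosed {x : EuclideanSpace ℝ (Fin n) | F η x = 1} :=
    isClosed_eq (F_cont η) continuous_const
  have hAopen : IsOpen (Ω \ {x | F η x = 1}) := hΩ.sdiff hEc
  have hclopen : ∀ S : Set (EuclideanSpace ℝ (Fin n)), IsPreconnected S →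
      (∀ z ∈ S, F η z ≠ 1) → (S ∩ (Ω \ {x | F η x = 1})).Nonempty →
      S ⊆ Ω \ {x | F η x = 1} := by
    intro S hS hSE hSA
    refine hS.subset_left_of_subset_union hAopen isClosed_closure.isOpen_compl
      (disjoint_compl_right.mono_left (Set.diff_subset.trans subset_closure)) ?_ hSA
    intro z hz
    by_cases hzc : z ∈ closure Ω
    · left
      by_cases hzΩ : z ∈ Ω
      · exact ⟨hzΩ, hSE z hz⟩
      · exact absurd (hsub z (by rw [hΩ.frontier_eq]; exact ⟨hzc, hzΩ⟩)) (hSE z hz)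
    · right; exact hzc
  obtain ⟨r, hr⟩ := isBounded_iff_forall_norm_le.mp hbdd
  have hAne : (Ω \ {x | F η x = 1}).Nonempty := by
    obtain ⟨x₀, hx₀⟩ := hne
    by_cases h : F η x₀ = 1
    · obtain ⟨ε, hε, hball⟩ := Metric.isOpen_iff.mp hΩ x₀ hx₀
      obtain ⟨y, hy1, hy2⟩ := near_gt h hε
      exact ⟨y, hball (by rwa [Metric.mem_ball]), fun hm => by
        simp only [Set.mem_setOf_eq] at hm; linarith⟩
    · exact ⟨x₀, hx₀, h⟩
  have hAU : Ω \ {x | F η x = 1} ⊆ {x | F η x < 1} := by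
    intro a ha
    rcases lt_trichotomy (F η a) 1 with h|h|h
    · exact h
    · exact absurd h ha.2
    · exfalso
      have ha0 : a ≠ 0 := fun h0 => by rw [h0, F_zero] at h; norm_num at h
      have hna : 0 < ‖a‖ := norm_pos_iff.mpr ha0
      have hray : ((fun t : ℝ => t • a) '' Set.Ici 1) ⊆ Ω \ {x | F η x = 1} := by
        refine hclopen _ (isPreconnected_Ici.image _ (by fun_prop)) ?_
          ⟨a, ⟨1, Set.self_mem_Ici, one_smul ℝ a⟩, ha⟩
        rintro z ⟨t, ht, rfl⟩
        rw [Set.mem_Ici] at ht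
        rw [F_smul]
        intro heq
        have h1t : 1 ≤ t ^ 2 := by nlinarith
        have := mul_le_mul_of_nonneg_right h1t (le_of_lt (lt_trans one_pos h))
        rw [one_mul] at this
        linarith
      set t : ℝ := max 1 ((r + 1) / ‖a‖) with htdef
      have h1 : t • a ∈ Ω := (hray ⟨t, show t ∈ Set.Ici 1 from le_max_left 1 ((r + 1) / ‖a‖), rfl⟩).1
      have h2 : ‖t • a‖ ≤ r := hr _ h1
      have h3 : ‖t • a‖ = t * ‖a‖ := by
        rw [norm_smul, Real.norm_eq_abs, abs_of_pos (lt_of_lt_of_le one_pos (le_max_left _ _))]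
      have h4 : (r + 1) / ‖a‖ * ‖a‖ = r + 1 := by field_simp
      have h5 : (r + 1) / ‖a‖ ≤ t := le_max_right _ _
      nlinarith
  have hUA : {x | F η x < 1} ⊆ Ω \ {x | F η x = 1} := by
    obtain ⟨a, haA⟩ := hAne
    exact hclopen _ (convex_U η).isPreconnected (fun z hz => ne_of_lt hz) ⟨a, hAU haA, haA⟩
  have hΩle : Ω ⊆ {x | F η x ≤ 1} := by
    intro z hz
    by_cases h : F η z = 1
    · exact le_of_eq h
    · exact le_of_lt (show F η z < 1 from hAU ⟨hz, h⟩)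
  have hfront_eq : frontier Ω = {x | F η x = 1} := by
    refine Set.Subset.antisymm (fun x hx => hsub x hx) ?_
    intro z hz
    have hz1 : F η z = 1 := hz
    have hzΩ : z ∉ Ω := by
      intro hzΩ
      obtain ⟨ε, hε, hball⟩ := Metric.isOpen_iff.mp hΩ z hzΩ
      obtain ⟨y, hy1, hy2⟩ := near_gt hz1 hε
      have : F η y ≤ 1 := hΩle (hball (by rwa [Metric.mem_ball]))
      linarith
    have hzcl : z ∈ closure Ω := by
      have hmem : z ∈ closure {x | F η x < 1} := by
        rw [Metric.mem_closure_iff]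
        intro ε hε
        obtain ⟨y, hy1, hy2⟩ := near_lt hz1 hε
        exact ⟨y, hy2, by rwa [dist_comm]⟩
      exact closure_mono (hUA.trans Set.diff_subset) hmem
    rw [hΩ.frontier_eq]
    exact ⟨hzcl, hzΩ⟩
  -- all η i are equal
  have hkey : ∀ i j : Fin n, i ≠ j → η i = η j := by
    intro i j hij
    set x0 : EuclideanSpace ℝ (Fin n) :=
      EuclideanSpace.single i ((Real.sqrt 2 * η i)⁻¹) +
      EuclideanSpace.single j ((Real.sqrt 2 * η j)⁻¹) with hx0def
    have hs2 : (0:ℝ) < Real.sqrt 2 := Real.sqrt_pos.mpr (by norm_num)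
    have hx0i : x0 i = (Real.sqrt 2 * η i)⁻¹ := by
      rw [hx0def]; simp [EuclideanSpace.single_apply, hij, hij.symm]
    have hx0j : x0 j = (Real.sqrt 2 * η j)⁻¹ := by
      rw [hx0def]; simp [EuclideanSpace.single_apply, hij, hij.symm]
    have hx0k : ∀ k, k ≠ i → k ≠ j → x0 k = 0 := by
      intro k hki hkj; rw [hx0def]; simp [EuclideanSpace.single_apply, hki, hkj]
    have hsq2 : Real.sqrt 2 ^ 2 = 2 := Real.sq_sqrt (by norm_num)
    have hx0F : F η x0 = 1 := by
      unfold NRAux.F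
      rw [sum_split hij (fun k => (η k * x0 k) ^ 2)]
      have hrest : ∑ k ∈ (Finset.univ.erase i).erase j, (η k * x0 k) ^ 2 = 0 := by
        refine Finset.sum_eq_zero fun k hk => ?_
        rw [Finset.mem_erase, Finset.mem_erase] at hk
        rw [hx0k k hk.2.1 hk.1]; ring
      rw [hrest, hx0i, hx0j]
      have hmul : ∀ k, η k * (Real.sqrt 2 * η k)⁻¹ = (Real.sqrt 2)⁻¹ := by
        intro k
        rw [mul_inv, mul_comm ((Real.sqrt 2)⁻¹) ((η k)⁻¹), ← mul_assoc,
          mul_inv_cancel₀ (hη k), one_mul]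
      rw [hmul i, hmul j, inv_pow, hsq2]
      norm_num
    have hx0fr : x0 ∈ frontier Ω := by rw [hfront_eq]; exact hx0F
    have hv := tangent_mem η hη hij x0 hx0F
    rw [← hfront_eq] at hv
    have h0 := hnormal x0 hx0fr _ hv
    set v : EuclideanSpace ℝ (Fin n) :=
      EuclideanSpace.single i (-(η j * x0 j) / η i) +
      EuclideanSpace.single j ((η i * x0 i) / η j) with hvdef
    have hvi : v i = -(η j * x0 j) / η i := by
      rw [hvdef]; simp [EuclideanSpace.single_apply, hij, hij.symm]
    have hvj : v j = (η i * x0 i) / η j := by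
      rw [hvdef]; simp [EuclideanSpace.single_apply, hij, hij.symm]
    have hvk : ∀ k, k ≠ i → k ≠ j → v k = 0 := by
      intro k hki hkj; rw [hvdef]; simp [EuclideanSpace.single_apply, hki, hkj]
    have hinner : (0:ℝ) = ∑ k, (ν x0 k) * (v k) := by
      rw [← h0, PiLp.inner_apply]
      exact Finset.sum_congr rfl fun k _ => by
        simp [RCLike.inner_apply, conj_trivial]; ring
    rw [sum_split hij (fun k => (ν x0 k) * (v k))] at hinner
    have hrest : ∑ k ∈ (Finset.univ.erase i).erase j, (ν x0 k) * (v k) = 0 := by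
      refine Finset.sum_eq_zero fun k hk => ?_
      rw [Finset.mem_erase, Finset.mem_erase] at hk
      rw [hvk k hk.2.1 hk.1]; ring
    rw [hrest, hvi, hvj, hform x0 hx0fr i, hform x0 hx0fr j] at hinner
    have hxi0 : x0 i ≠ 0 := by
      rw [hx0i]; exact inv_ne_zero (mul_ne_zero (ne_of_gt hs2) (hη i))
    have hxj0 : x0 j ≠ 0 := by
      rw [hx0j]; exact inv_ne_zero (mul_ne_zero (ne_of_gt hs2) (hη j))
    have hfinal : x0 i * x0 j * (η i - η j) * (η i * η j) = 0 := by
      field_simp [hη i, hη j] at hinner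
      linear_combination -(η i * η j) * hinner
    rcases mul_eq_zero.mp hfinal with h|h
    · rcases mul_eq_zero.mp h with h2|h2
      · exact absurd h2 (mul_ne_zero hxi0 hxj0)
      · linarith [sub_eq_zero.mp h2]
    · exact absurd h (mul_ne_zero (hη i) (hη j))
  set c : ℝ := η ⟨0, hn⟩ with hc
  have hc0 : c ≠ 0 := hη _
  have hzc : ∀ k, η k = c := by
    intro k
    by_cases h : k = ⟨0, hn⟩
    · rw [h]
    · exact hkey k _ h
  refine ⟨fun i j => by rw [hzc i, hzc j], |c|⁻¹, by positivity, ?_⟩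
  rw [hfront_eq]
  ext z
  simp only [Set.mem_setOf_eq, Metric.mem_sphere, dist_zero_right]
  have hFz : F η z = c ^ 2 * ‖z‖ ^ 2 := by
    unfold NRAux.F
    rw [EuclideanSpace.norm_eq, Real.sq_sqrt (by positivity), Finset.mul_sum]
    exact Finset.sum_congr rfl fun k _ => by
      rw [hzc k, Real.norm_eq_abs, sq_abs]; ring
  constructor
  · intro h
    rw [hFz] at h
    have habs : ((|c|)⁻¹ : ℝ) ^ 2 = (c ^ 2)⁻¹ := by rw [inv_pow, sq_abs]
    have h2 : ‖z‖ ^ 2 = (|c|⁻¹) ^ 2 := by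
      rw [habs]
      field_simp
      linear_combination h
    calc ‖z‖ = Real.sqrt (‖z‖ ^ 2) := (Real.sqrt_sq (norm_nonneg z)).symm
      _ = Real.sqrt ((|c|⁻¹) ^ 2) := by rw [h2]
      _ = |c|⁻¹ := Real.sqrt_sq (by positivity)
  · intro h
    rw [hFz, h, inv_pow, sq_abs]
    field_simp
end

section
/- Let n ≥ 1, let λ₁,…,λₙ, C₁,…,Cₙ be positive reals, and let β ≥ 0, V, S > 0. Suppose λᵢ Cᵢ ≤ V + β(S - Bᵢ) and V² ≤ Cᵢ Bᵢ for positive reals B₁,…,Bₙ with ∑ᵢ Bᵢ = S. Then V² ∑ᵢ λᵢ ≤ (V + βS)S − (β/n)S², i.e., ∑ᵢ λᵢ ≤ S/V + (n−1)βS²/(nV²). -/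
open Finset

theorem wentzell_sum_bound (n : ℕ) (hn : 1 ≤ n) (lam C B : Fin n → ℝ)
    (hlam : ∀ i, 0 < lam i) (hC : ∀ i, 0 < C i) (hB : ∀ i, 0 < B i)
    (β V S : ℝ) (hβ : 0 ≤ β) (hV : 0 < V) (hS : 0 < S)
    (h1 : ∀ i, lam i * C i ≤ V + β * (S - B i))
    (h2 : ∀ i, V ^ 2 ≤ C i * B i)
    (hsum : ∑ i, B i = S) :
    V ^ 2 * ∑ i, lam i ≤ (V + β * S) * S - (β / n) * S ^ 2 ∧
      ∑ i, lam i ≤ S / V + (n - 1) * β * S ^ 2 / (n * V ^ 2) := by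
  have hn' : (0:ℝ) < n := by exact_mod_cast Nat.lt_of_lt_of_le Nat.zero_lt_one hn
  have key : ∀ i, lam i * V ^ 2 ≤ (V + β * S) * B i - β * (B i)^2 := by
    intro i
    have h3 : lam i * V ^ 2 ≤ lam i * (C i * B i) :=
      mul_le_mul_of_nonneg_left (h2 i) (hlam i).le
    have h4 : lam i * (C i * B i) = (lam i * C i) * B i := by ring
    have h5 : (lam i * C i) * B i ≤ (V + β * (S - B i)) * B i :=
      mul_le_mul_of_nonneg_right (h1 i) (hB i).le
    nlinarith [h3]
  have hsum1 : ∑ i, lam i * V ^ 2 ≤ ∑ i, ((V + β * S) * B i - β * (B i)^2) :=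
    Finset.sum_le_sum fun i _ => key i
  have hcs : S ^ 2 ≤ n * ∑ i, (B i)^2 := by
    have := sq_sum_le_card_mul_sum_sq (s := (univ : Finset (Fin n))) (f := B)
    simpa [hsum] using this
  have hBsq : S ^ 2 / n ≤ ∑ i, (B i)^2 := by
    rw [div_le_iff₀ hn']; linarith [hcs]
  have hmain : V ^ 2 * ∑ i, lam i ≤ (V + β * S) * S - (β / n) * S ^ 2 := by
    have e1 : ∑ i, lam i * V ^ 2 = V ^ 2 * ∑ i, lam i := by
      rw [← Finset.sum_mul]; ring
    have e2 : ∑ i, ((V + β * S) * B i - β * (B i)^2)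
        = (V + β * S) * S - β * ∑ i, (B i)^2 := by
      rw [Finset.sum_sub_distrib, ← Finset.mul_sum, ← Finset.mul_sum, hsum]
    have h6 : β * (S ^ 2 / n) ≤ β * ∑ i, (B i)^2 :=
      mul_le_mul_of_nonneg_left hBsq hβ
    have : V ^ 2 * ∑ i, lam i ≤ (V + β * S) * S - β * (S ^ 2 / n) := by
      rw [← e1]; linarith [hsum1, e2 ▸ hsum1, h6]
    calc V ^ 2 * ∑ i, lam i ≤ (V + β * S) * S - β * (S ^ 2 / n) := this
      _ = (V + β * S) * S - (β / n) * S ^ 2 := by ring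
  refine ⟨hmain, ?_⟩
  rw [div_add_div _ _ (ne_of_gt hV) (by positivity : (n:ℝ) * V ^ 2 ≠ 0),
    le_div_iff₀ (by positivity : (0:ℝ) < V * (n * V ^ 2))]
  have hV2 : (0:ℝ) < V ^ 2 := by positivity
  have e1 : ∑ i, lam i * V ^ 2 = V ^ 2 * ∑ i, lam i := by
    rw [← Finset.sum_mul]; ring
  have e2 : ∑ i, ((V + β * S) * B i - β * (B i)^2)
      = (V + β * S) * S - β * ∑ i, (B i)^2 := by
    rw [Finset.sum_sub_distrib, ← Finset.mul_sum, ← Finset.mul_sum, hsum]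
  have hβcs : β * S ^ 2 ≤ (n:ℝ) * (β * ∑ i, (B i)^2) := by
    have := mul_le_mul_of_nonneg_left hcs hβ
    nlinarith [this]
  have hmain' : (n:ℝ) * (V ^ 2 * ∑ i, lam i) ≤ (n:ℝ) * ((V + β * S) * S) - β * S ^ 2 := by
    have h7 : V ^ 2 * ∑ i, lam i ≤ (V + β * S) * S - β * ∑ i, (B i)^2 := by
      rw [← e1]; linarith [e2 ▸ hsum1]
    nlinarith [mul_le_mul_of_nonneg_left h7 hn'.le]
  nlinarith [mul_le_mul_of_nonneg_left hmain' hV.le]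
end
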